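/- If the set Adj⁺(T, S) of trees obtainable from T by adjoining each element of the finite set S of adjunct trees at least once is non-empty, then there exists T' ∈ Adj⁺(T, S) obtained by adjoining each element of S exactly once. -/

import Mathlib

/-- Trees whose internal nodes are labeled by nonterminals in `V`
and whose leaves are labeled by elements of `L`. -/
inductive PTree (V L : Type) : Type
  | leaf : L → PTree V L
  | node : V → List (PTree V L) → PTree V L

namespace PTree

variable {V A L : Type}

/-- Leaf alphabet for contexts/adjunct trees: a letter-or-ε leaf, or the hole. -/
abbrev Aug (A : Type) := Option A ⊕ Unit

/-- The root label of a tree: a nonterminal or a leaf label. -/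
def rootLabel : PTree V L → V ⊕ L
  | .leaf a => .inr a
  | .node X _ => .inl X

/-- Set of nonterminals occurring in a tree. -/
def ntSet : PTree V L → Set V
  | .leaf _ => ∅
  | .node X ts => insert X ((ts.attach.map (fun ⟨t, _⟩ => ntSet t)).foldr (· ∪ ·) ∅)

/-- A tree is simple if no nonterminal occurs twice on a root-to-leaf path. -/
def Simple : PTree V L → Prop
  | .leaf _ => True
  | .node X ts => ∀ t ∈ ts, X ∉ ntSet t ∧ Simple t

/-- Number of holes in a context / adjunct tree. -/
def holes : PTree V (Aug A) → ℕ
  | .leaf (.inr _) => 1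
  | .leaf (.inl _) => 0
  | .node _ ts => (ts.attach.map (fun ⟨t, _⟩ => holes t)).sum

/-- Substitute the tree `T` for every hole. -/
def subst (T : PTree V (Option A)) : PTree V (Aug A) → PTree V (Option A)
  | .leaf (.inl a) => .leaf a
  | .leaf (.inr _) => T
  | .node X ts => .node X (ts.attach.map (fun ⟨t, _⟩ => subst T t))

/-- Embed a `(V,A)`-tree into trees with holes (no holes created). -/
def toAug : PTree V (Option A) → PTree V (Aug A)
  | .leaf a => .leaf (.inl a)
  | .node X ts => .node X (ts.attach.map (fun ⟨t, _⟩ => toAug t))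

/-- Yield of a `(V,A)`-tree. -/
def yield : PTree V (Option A) → List A
  | .leaf none => []
  | .leaf (some a) => [a]
  | .node _ ts => (ts.attach.map (fun ⟨t, _⟩ => yield t)).flatten

/-- Yield of a context / adjunct tree, holes contributing `ε`. -/
def yieldA : PTree V (Aug A) → List A
  | .leaf (.inl none) => []
  | .leaf (.inl (some a)) => [a]
  | .leaf (.inr _) => []
  | .node _ ts => (ts.attach.map (fun ⟨t, _⟩ => yieldA t)).flatten

/-- Height of a tree. -/
def height : PTree V L → ℕ
  | .leaf _ => 0
  | .node _ ts => (ts.attach.map (fun ⟨t, _⟩ => height t)).foldr max 0 + 1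

/-- Size (number of nodes) of a tree. -/
def tsize : PTree V L → ℕ
  | .leaf _ => 1
  | .node _ ts => (ts.attach.map (fun ⟨t, _⟩ => tsize t)).sum + 1

end PTree

open PTree

/-- A context-free grammar over `A` with nonterminals `V`:
a finite set of rules `D ⊆ V × (V ∪ A ∪ {ε})⁺` and a start symbol. -/
structure CFG (V A : Type) where
  rules : Set (V × List (V ⊕ Option A))
  rules_fin : rules.Finite
  start : V

variable {V A : Type}

/-- A tree is a valid derivation w.r.t. the rules `D`. -/
inductive IsDeriv (D : Set (V × List (V ⊕ Option A))) : PTree V (Option A) → Prop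
  | leaf (a : Option A) : IsDeriv D (.leaf a)
  | node (X : V) (ts : List (PTree V (Option A))) :
      (X, ts.map rootLabel) ∈ D → (∀ t ∈ ts, IsDeriv D t) → IsDeriv D (.node X ts)

/-- The set `Trees(G)` of derivation trees of `G`. -/
def TreesSet (G : CFG V A) : Set (PTree V (Option A)) :=
  {T | T.rootLabel = .inl G.start ∧ IsDeriv G.rules T}

/-- The language of `G`: yields of derivation trees. -/
def lang (G : CFG V A) : Set (List A) := PTree.yield '' TreesSet G

/-- An adjunct tree is represented by its root nonterminal `X` together with a tree
over `V, A ∪ {X}` (the distinguished leaf `X` being the hole). -/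
abbrev AdjT (V A : Type) := V × PTree V (Aug A)

/-- Wellformedness of an adjunct tree: root node labeled `X`, exactly one `X`-leaf. -/
def WFAdjunct (p : AdjT V A) : Prop :=
  (∃ ts, p.2 = PTree.node p.1 ts) ∧ p.2.holes = 1

/-- A simple adjunct tree: no nonterminal repeats on paths from a child of the root. -/
def SimpleAdjunct (p : AdjT V A) : Prop :=
  ∃ ts, p.2 = PTree.node p.1 ts ∧ ∀ t ∈ ts, Simple t

/-- Root label of a subtree of an adjunct tree with root nonterminal `X`:
the hole leaf is labeled `X`. -/
def augRoot (X : V) : PTree V (Aug A) → V ⊕ Option A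
  | .leaf (.inl a) => .inr a
  | .leaf (.inr _) => .inl X
  | .node Y _ => .inl Y

/-- An adjunct tree is extracted from derivation trees of `D`: every internal
node respects the rules. -/
inductive IsDerivA (D : Set (V × List (V ⊕ Option A))) (X : V) : PTree V (Aug A) → Prop
  | leaf (a : Aug A) : IsDerivA D X (.leaf a)
  | node (Y : V) (ts : List (PTree V (Aug A))) :
      (Y, ts.map (augRoot X)) ∈ D → (∀ t ∈ ts, IsDerivA D X t) → IsDerivA D X (.node Y ts)

/-- `T ⊢_α T'` : `T'` is obtained from `T` by adjoining the adjunct tree `α`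
at some occurrence of its root nonterminal. -/
def Adjoins (α : AdjT V A) (T T' : PTree V (Option A)) : Prop :=
  WFAdjunct α ∧
  ∃ (C : PTree V (Aug A)) (ts : List (PTree V (Option A))),
    C.holes = 1 ∧
    subst (.node α.1 ts) C = T ∧
    subst (subst (.node α.1 ts) α.2) C = T'

/-- `AdjChain L T T'` : `T'` is obtained from `T` by successively adjoining
the adjunct trees listed in `L`. -/
def AdjChain : List (AdjT V A) → PTree V (Option A) → PTree V (Option A) → Prop
  | [], T, T' => T = T'
  | α :: L, T, T' => ∃ T₁, Adjoins α T T₁ ∧ AdjChain L T₁ T'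

/-- `Adj⁺(T,S)` : trees obtained from `T` using exactly the adjunct trees of `S`,
each at least once. -/
def AdjPlus (T : PTree V (Option A)) (S : Set (AdjT V A)) : Set (PTree V (Option A)) :=
  {T' | ∃ L : List (AdjT V A), AdjChain L T T' ∧ {α | α ∈ L} = S}

/-- `Adj(T,S)` : trees obtained from `T` using adjunct trees of `S`, arbitrarily often. -/
def AdjStar (T : PTree V (Option A)) (S : Set (AdjT V A)) : Set (PTree V (Option A)) :=
  {T' | ∃ L : List (AdjT V A), AdjChain L T T' ∧ {α | α ∈ L} ⊆ S}

namespace PTree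
variable [DecidableEq V]

mutual
/-- Find the leftmost `X`-rooted subtree: returns the surrounding context
(with a hole in its place) and the subtree. -/
def extract (X : V) : PTree V (Option A) → Option (PTree V (Aug A) × PTree V (Option A))
  | .leaf _ => none
  | .node Y ts =>
    if Y = X then some (.leaf (.inr ()), .node Y ts)
    else match extractL X ts with
      | none => none
      | some (Cs, sub) => some (.node Y Cs, sub)

/-- List version of `extract`. -/
def extractL (X : V) : List (PTree V (Option A)) → Option (List (PTree V (Aug A)) × PTree V (Option A))
  | [] => none
  | t :: ts =>
    match extract X t with
    | some (C, sub) => some (C :: ts.map toAug, sub)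
    | none =>
      match extractL X ts with
      | some (Cs, sub) => some (toAug t :: Cs, sub)
      | none => none
end

/-- Takahashi's decomposition of a tree into a simple tree and a set of
simple adjunct trees. -/
def decomp : PTree V (Option A) → PTree V (Option A) × Set (AdjT V A)
  | .leaf a => (.leaf a, ∅)
  | .node X ts =>
    let rs := ts.attach.map (fun ⟨t, _⟩ => decomp t)
    let S := (rs.map Prod.snd).foldr (· ∪ ·) ∅
    match extractL X (rs.map Prod.fst) with
    | none => (.node X (rs.map Prod.fst), S)
    | some (Cs, sub) => (sub, insert (X, PTree.node X Cs) S)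

end PTree

/-- The simple trees arising from decompositions of derivation trees. -/
def sTrees (G : CFG V A) [DecidableEq V] : Set (PTree V (Option A)) :=
  {T' | ∃ T ∈ TreesSet G, (decomp T).1 = T'}

/-- The simple adjunct trees arising from decompositions of derivation trees. -/
def sLoops (G : CFG V A) [DecidableEq V] : Set (AdjT V A) :=
  {α | ∃ T ∈ TreesSet G, α ∈ (decomp T).2}

/-- Parikh map. -/
def parikh [DecidableEq A] (w : List A) : A → ℕ := fun a => w.count a

/-- Linear subsets of `ℕ^A`. -/
def IsLinear (S : Set (A → ℕ)) : Prop :=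
  ∃ (v₀ : A → ℕ) (k : ℕ) (v : Fin k → A → ℕ),
    S = {u | ∃ x : Fin k → ℕ, u = v₀ + ∑ i, x i • v i}

/-- Semilinear subsets of `ℕ^A`: finite unions of linear sets. -/
def IsSemilinear (S : Set (A → ℕ)) : Prop :=
  ∃ (n : ℕ) (f : Fin n → Set (A → ℕ)), (∀ i, IsLinear (f i)) ∧ S = ⋃ i, f i

/-! Whether an adjunct tree `α` can be adjoined to a tree depends only on the set of nonterminals
occurring in the tree (the root of `α` has to occur), and adjoining `α` adds to this set exactly
the nonterminals of `α`. Along a chain of adjoinings, the set reached after a prefix therefore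
depends only on which adjunct trees the prefix uses, so a chain in which every repeated use of
an adjunct tree is dropped can still be carried out. -/

theorem Set.mem_foldr_union {α : Type*} {a : α} {l : List (Set α)} :
    a ∈ l.foldr (· ∪ ·) ∅ ↔ ∃ s ∈ l, a ∈ s := by
  induction l <;> simp [*]

namespace PTree

variable {L : Type}

@[induction_eliminator]
theorem induction {motive : PTree V L → Prop} (leaf : ∀ a, motive (.leaf a))
    (node : ∀ X ts, (∀ t ∈ ts, motive t) → motive (.node X ts)) : ∀ t, motive t
  | .leaf a => leaf a
  | .node X ts => node X ts fun t _ => induction leaf node t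

@[simp]
theorem ntSet_leaf (a : L) : ntSet (.leaf a : PTree V L) = ∅ := by
  rw [ntSet]

@[simp]
theorem mem_ntSet_node {X Y : V} {ts : List (PTree V L)} :
    X ∈ ntSet (.node Y ts) ↔ X = Y ∨ ∃ t ∈ ts, X ∈ ntSet t := by
  rw [ntSet]
  simp [Set.mem_foldr_union]

@[simp]
theorem holes_node (X : V) (ts : List (PTree V (Aug A))) :
    (node X ts).holes = (ts.map holes).sum := by
  simp [holes]

@[simp]
theorem subst_node (U : PTree V (Option A)) (X : V) (ts : List (PTree V (Aug A))) :
    subst U (node X ts) = node X (ts.map (subst U)) := by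
  simp [subst]

@[simp]
theorem toAug_node (X : V) (ts : List (PTree V (Option A))) :
    toAug (node X ts) = node X (ts.map toAug) := by
  simp [toAug]

@[simp]
theorem subst_toAug (U t : PTree V (Option A)) : subst U (toAug t) = t := by
  induction t with
  | leaf a => simp [toAug, subst]
  | node X ts ih => simpa [Function.comp_def] using List.map_congr_left ih

@[simp]
theorem holes_toAug (t : PTree V (Option A)) : (toAug t).holes = 0 := by
  induction t with
  | leaf a => simp [toAug, holes]
  | node X ts ih => simpa [List.sum_eq_zero_iff] using ih

theorem mem_ntSet_subst {X : V} {U : PTree V (Option A)} {C : PTree V (Aug A)} :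
    X ∈ ntSet (subst U C) ↔ X ∈ ntSet C ∨ (C.holes ≠ 0 ∧ X ∈ ntSet U) := by
  induction C with
  | leaf a => rcases a with a | u <;> simp [subst, holes]
  | node Y ts ih =>
    have hchild : (∃ t ∈ ts, X ∈ ntSet (subst U t)) ↔
        (∃ t ∈ ts, X ∈ ntSet t) ∨ ((∃ t ∈ ts, t.holes ≠ 0) ∧ X ∈ ntSet U) := by
      rw [exists_congr fun t => and_congr_right (ih t)]
      grind
    simp [hchild, List.sum_eq_zero_iff, or_assoc]

theorem exists_subst_eq_of_mem_ntSet {X : V} {T : PTree V (Option A)} (hX : X ∈ ntSet T) :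
    ∃ (C : PTree V (Aug A)) (ts : List (PTree V (Option A))),
      C.holes = 1 ∧ subst (node X ts) C = T := by
  induction T with
  | leaf a => simp at hX
  | node Y us ih =>
    obtain rfl | ⟨t, ht, hXt⟩ := mem_ntSet_node.1 hX
    · exact ⟨.leaf (.inr ()), us, by simp [holes], by simp [subst]⟩
    obtain ⟨C, ts, hC, rfl⟩ := ih t ht hXt
    obtain ⟨l₁, l₂, rfl⟩ := List.append_of_mem ht
    refine ⟨node Y (l₁.map toAug ++ C :: l₂.map toAug), ts, ?_, ?_⟩ <;>
      simp [hC, Function.comp_def]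

end PTree

namespace Adjoins

variable {α : AdjT V A} {T T' : PTree V (Option A)}

theorem root_mem_ntSet (h : Adjoins α T T') : α.1 ∈ ntSet T := by
  obtain ⟨-, C, ts, hC, rfl, -⟩ := h
  simp [mem_ntSet_subst, hC]

theorem ntSet_eq (h : Adjoins α T T') : ntSet T' = ntSet T ∪ ntSet α.2 := by
  obtain ⟨⟨-, hα⟩, C, ts, hC, rfl, rfl⟩ := h
  ext X
  simp only [mem_ntSet_subst, hC, hα, Set.mem_union]
  tauto

end Adjoins

theorem exists_adjoins_of_root_mem_ntSet {α : AdjT V A} {T : PTree V (Option A)}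
    (hα : WFAdjunct α) (hroot : α.1 ∈ ntSet T) : ∃ T', Adjoins α T T' := by
  obtain ⟨C, ts, hC, hT⟩ := exists_subst_eq_of_mem_ntSet hroot
  exact ⟨_, hα, C, ts, hC, hT, rfl⟩

theorem adjChain_append {L M : List (AdjT V A)} {T U : PTree V (Option A)} :
    AdjChain (L ++ M) T U ↔ ∃ W, AdjChain L T W ∧ AdjChain M W U := by
  induction L generalizing T with
  | nil => simp [AdjChain]
  | cons α L ih => simp only [List.cons_append, AdjChain, ih]; grind

theorem adjChain_concat {L : List (AdjT V A)} {α : AdjT V A} {T U : PTree V (Option A)} :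
    AdjChain (L ++ [α]) T U ↔ ∃ W, AdjChain L T W ∧ Adjoins α W U := by
  simp [adjChain_append, AdjChain]

namespace AdjChain

variable {L : List (AdjT V A)} {T U : PTree V (Option A)}

theorem mem_ntSet_iff (h : AdjChain L T U) {X : V} :
    X ∈ ntSet U ↔ X ∈ ntSet T ∨ ∃ α ∈ L, X ∈ ntSet α.2 := by
  induction L generalizing T with
  | nil => cases h; simp
  | cons α L ih =>
    obtain ⟨T₁, hα, h⟩ := h
    rw [ih h, hα.ntSet_eq]
    simp only [Set.mem_union, List.mem_cons, exists_eq_or_imp]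
    tauto

theorem exists_nodup (h : AdjChain L T U) :
    ∃ (M : List (AdjT V A)) (U' : PTree V (Option A)),
      AdjChain M T U' ∧ M.Nodup ∧ ∀ α, α ∈ M ↔ α ∈ L := by
  induction L using List.reverseRecOn generalizing U with
  | nil => exact ⟨[], U, h, List.nodup_nil, by simp⟩
  | append_singleton L α ih =>
    obtain ⟨W, hL, hα⟩ := adjChain_concat.1 h
    obtain ⟨M, W', hM, hnodup, hmem⟩ := ih hL
    by_cases hαM : α ∈ M
    · exact ⟨M, W', hM, hnodup, fun β => by grind⟩
    have hsame : ntSet W' = ntSet W := by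
      ext X
      rw [hM.mem_ntSet_iff, hL.mem_ntSet_iff]
      simp only [hmem]
    obtain ⟨U', hU'⟩ := exists_adjoins_of_root_mem_ntSet hα.1 (hsame ▸ hα.root_mem_ntSet)
    exact ⟨M ++ [α], U', adjChain_concat.2 ⟨W', hM, hU'⟩,
      by simpa using hnodup.concat hαM, by simp [hmem]⟩

end AdjChain

/-- If `Adj⁺(T,S)` is nonempty then some `T' ∈ Adj⁺(T,S)` is obtained
by adjoining each element of `S` exactly once. -/
theorem adjplus_once {V A : Type} (T : PTree V (Option A)) (S : Set (AdjT V A))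
    (hS : S.Finite) (h : (AdjPlus T S).Nonempty) :
    ∃ T' ∈ AdjPlus T S, ∃ L : List (AdjT V A),
      AdjChain L T T' ∧ {α | α ∈ L} = S ∧ L.Nodup := by
  obtain ⟨T₀, L, hL, rfl⟩ := h
  obtain ⟨M, U, hM, hnodup, hmem⟩ := hL.exists_nodup
  have hset : {α | α ∈ M} = {α | α ∈ L} := Set.ext hmem
  exact ⟨U, ⟨M, hM, hset⟩, M, hM, hset, hnodup⟩
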